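/- arXiv:1511.03592 — 6 statements merged into one kernel-verified Lean document; each statement's English description precedes it below -/
import Mathlib

section
/- For any real number x with |x| ≤ 1 − δ, where 0 < δ < 1, it holds that 1 − cos(2πx) ≥ δ²x². -/
/-!
Since `1 - cos (2πx) = 2 sin² (πx)`, it suffices to show `δ |x| ≤ sin (π |x|)`. Jordan's inequality
on both halves of `[0, π]` gives `sin (π y) ≥ 2 min (y, 1 - y)` for `y ∈ [0, 1]`, and for
`y ≤ 1 - δ` both `2 y` and `2 (1 - y) ≥ 2 δ` dominate `δ y`.
-/

open Real

theorem two_mul_min_le_sin_pi_mul {y : ℝ} (hy₀ : 0 ≤ y) (hy₁ : y ≤ 1) :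
    2 * min y (1 - y) ≤ sin (π * y) := by
  wlog hy : y ≤ 1 / 2 generalizing y
  · have h := this (y := 1 - y) (by linarith) (by linarith) (by linarith)
    rwa [sub_sub_cancel, min_comm, mul_one_sub, sin_pi_sub] at h
  have jordan := mul_le_sin (x := π * y) (by positivity) (by nlinarith [pi_pos])
  rw [← mul_assoc, div_mul_cancel₀ _ pi_ne_zero] at jordan
  exact (mul_le_mul_of_nonneg_left (min_le_left _ _) zero_le_two).trans jordan

theorem mul_le_sin_pi_mul {δ y : ℝ} (hδ : 0 ≤ δ) (hy₀ : 0 ≤ y) (hy : y ≤ 1 - δ) :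
    δ * y ≤ sin (π * y) := by
  refine le_trans ?_ (two_mul_min_le_sin_pi_mul hy₀ (by linarith))
  rcases min_choice y (1 - y) with h | h <;> rw [h] <;> nlinarith

theorem stmt0_general (δ x : ℝ) (hδ0 : 0 < δ) (hx : |x| ≤ 1 - δ) :
    1 - Real.cos (2 * Real.pi * x) ≥ δ ^ 2 * x ^ 2 := by
  have hsin : δ * |x| ≤ sin (π * |x|) := mul_le_sin_pi_mul hδ0.le (abs_nonneg x) hx
  have hsq : (δ * |x|) ^ 2 ≤ sin (π * |x|) ^ 2 := pow_le_pow_left₀ (by positivity) hsin 2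
  have hsin_sq : sin (π * |x|) ^ 2 = sin (π * x) ^ 2 := by
    rcases abs_choice x with h | h <;> simp [h]
  rw [mul_pow, sq_abs, hsin_sq] at hsq
  have hcos : 1 - cos (2 * π * x) = 2 * sin (π * x) ^ 2 := by
    rw [sin_sq_eq_half_sub, ← mul_assoc]; ring
  rw [ge_iff_le, hcos]
  linarith [sq_nonneg (sin (π * x))]

/-- For any real number `x` with `|x| ≤ 1 − δ`, where `0 < δ < 1`,
it holds that `1 − cos(2πx) ≥ δ²x²`. -/
theorem stmt0 (δ x : ℝ) (hδ0 : 0 < δ) (hδ1 : δ < 1) (hx : |x| ≤ 1 - δ) :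
    1 - Real.cos (2 * Real.pi * x) ≥ δ ^ 2 * x ^ 2 :=
  stmt0_general δ x hδ0 hx
end

section
/- For every ξ ∈ ℝ^k, there exist an integer a with 0 ≤ a ≤ k and an integer vector b ∈ ℤ^k such that every coordinate of ξ − b lies in the interval [a/(k+1), (a+k)/(k+1)]. -/
/-- For every `ξ ∈ ℝ^k`, there exist an integer `a` with `0 ≤ a ≤ k` and an integer
vector `b ∈ ℤ^k` such that every coordinate of `ξ − b` lies in the interval
`[a/(k+1), (a+k)/(k+1)]`. -/
theorem stmt1 (k : ℕ) (hk : 0 < k) (ξ : Fin k → ℝ) :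
    ∃ (a : ℕ) (b : Fin k → ℤ), a ≤ k ∧
      ∀ i, (a : ℝ) / (k + 1) ≤ ξ i - b i ∧ ξ i - b i ≤ ((a : ℝ) + k) / (k + 1) := by
  have hK : (0 : ℝ) < (k : ℝ) + 1 := by positivity
  set m : Fin k → ℤ := fun i => ⌊Int.fract (ξ i) * ((k : ℝ) + 1)⌋ with hm
  have hfr0 : ∀ i, 0 ≤ Int.fract (ξ i) := fun i => Int.fract_nonneg _
  have hfr1 : ∀ i, Int.fract (ξ i) < 1 := fun i => Int.fract_lt_one _
  have hm0 : ∀ i, 0 ≤ m i := fun i => Int.floor_nonneg.mpr (mul_nonneg (hfr0 i) hK.le)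
  have hmk : ∀ i, m i ≤ k := by
    intro i
    have h1 : Int.fract (ξ i) * ((k : ℝ) + 1) < (k : ℝ) + 1 := by
      nlinarith [hfr1 i, hfr0 i]
    have h2 : m i < (k : ℤ) + 1 := Int.floor_lt.mpr (by push_cast; linarith)
    omega
  have hlb : ∀ i, ((m i : ℝ)) ≤ Int.fract (ξ i) * ((k : ℝ) + 1) := fun i => Int.floor_le _
  have hub : ∀ i, Int.fract (ξ i) * ((k : ℝ) + 1) < (m i : ℝ) + 1 := fun i => Int.lt_floor_add_one _
  let f : Fin k → Fin (k + 1) := fun i => ⟨(m i).toNat, by have := hmk i; have := hm0 i; omega⟩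
  obtain ⟨j, hj⟩ : ∃ j : Fin (k + 1), ∀ i, f i ≠ j := by
    by_contra h
    push_neg at h
    have hs : Function.Surjective f := fun j => h j
    have := Fintype.card_le_of_surjective f hs
    simp at this
  have hj' : ∀ i, m i ≠ ((j : ℕ) : ℤ) := by
    intro i hcon
    exact hj i (Fin.ext (by simp [f, hcon]))
  rcases eq_or_lt_of_le (Nat.lt_succ_iff.mp j.isLt) with hjk | hjk
  · -- j = k : take a = 0
    refine ⟨0, fun i => ⌊ξ i⌋, Nat.zero_le _, fun i => ?_⟩
    have hfe : ξ i - (⌊ξ i⌋ : ℝ) = Int.fract (ξ i) := rfl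
    constructor
    · rw [hfe]; simpa using div_nonneg (hfr0 i) hK.le
    · rw [hfe]
      have hmi : m i ≤ (k : ℤ) - 1 := by have := hmk i; have := hj' i; omega
      have h1 : Int.fract (ξ i) * ((k : ℝ) + 1) < (k : ℝ) := by
        have := hub i
        have : (m i : ℝ) + 1 ≤ (k : ℝ) := by exact_mod_cast (by omega : m i + 1 ≤ (k : ℤ))
        linarith [hub i]
      rw [le_div_iff₀ hK]
      push_cast
      nlinarith [hfr0 i]
  · -- j < k : take a = j + 1
    refine ⟨(j : ℕ) + 1, fun i => if ((j : ℕ) : ℤ) < m i then ⌊ξ i⌋ else ⌊ξ i⌋ - 1, by omega, fun i => ?_⟩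
    have ha : (((j : ℕ) + 1 : ℕ) : ℝ) = (j : ℕ) + 1 := by push_cast; ring
    by_cases hc : ((j : ℕ) : ℤ) < m i
    · simp only [hc, if_pos]
      have hfe : ξ i - (⌊ξ i⌋ : ℝ) = Int.fract (ξ i) := rfl
      rw [hfe]
      have h1 : ((j : ℕ) : ℝ) + 1 ≤ (m i : ℝ) := by exact_mod_cast (by omega : ((j : ℕ) : ℤ) + 1 ≤ m i)
      have hjnn : (0 : ℝ) ≤ ((j : ℕ) : ℝ) := Nat.cast_nonneg _
      constructor
      · rw [div_le_iff₀ hK]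
        push_cast
        nlinarith [hlb i]
      · rw [le_div_iff₀ hK]
        push_cast
        nlinarith [hfr1 i]
    · simp only [hc, if_neg]
      push_cast
      have hmi : (m i : ℝ) + 1 ≤ ((j : ℕ) : ℝ) := by
        exact_mod_cast (by have := hj' i; omega : m i + 1 ≤ ((j : ℕ) : ℤ))
      have hfe : ξ i - ((⌊ξ i⌋ : ℝ) - 1) = Int.fract (ξ i) + 1 := by
        unfold Int.fract; ring
      rw [hfe]
      have hj1 : ((j : ℕ) : ℝ) + 1 ≤ (k : ℝ) + 1 := by
        exact_mod_cast (by omega : (j : ℕ) + 1 ≤ k + 1)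
      constructor
      · rw [div_le_iff₀ hK]
        nlinarith [hfr0 i]
      · rw [le_div_iff₀ hK]
        nlinarith [hub i, hmi]
end

section
/- Let X be an integer-valued random variable and let ξ ∈ ℝ and δ ∈ (0,1) be such that ξ·(X − X') ∈ [−(1−δ), 1−δ] almost surely, where X' is an independent copy of X. Then |E[exp(−2πi ξ X)]|² ≤ exp(−δ² · 2·Var[ξ X]). -/
open MeasureTheory ProbabilityTheory


private lemma sin_bound_aux {δ t : ℝ} (hδ0 : 0 < δ) (hδ1 : δ < 1)
    (ht0 : 0 ≤ t) (ht : t ≤ 1 - δ) : δ * t ≤ Real.sin (Real.pi * t) := by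
  have hπ := Real.pi_pos
  rcases le_or_gt t (1/2) with h | h
  · have h1 : 2 / Real.pi * (Real.pi * t) ≤ Real.sin (Real.pi * t) :=
      Real.mul_le_sin (by positivity) (by nlinarith)
    have h2 : 2 / Real.pi * (Real.pi * t) = 2 * t := by field_simp
    nlinarith
  · have h1 : 2 / Real.pi * (Real.pi * (1 - t)) ≤ Real.sin (Real.pi * (1 - t)) :=
      Real.mul_le_sin (by nlinarith) (by nlinarith)
    have h2 : Real.sin (Real.pi * (1 - t)) = Real.sin (Real.pi * t) := by
      rw [mul_sub, mul_one, Real.sin_pi_sub]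
    have h3 : 2 / Real.pi * (Real.pi * (1 - t)) = 2 * (1 - t) := by field_simp
    nlinarith

private lemma cos_bound_aux {δ z : ℝ} (hδ0 : 0 < δ) (hδ1 : δ < 1)
    (hz : |z| ≤ 1 - δ) : Real.cos (2 * Real.pi * z) ≤ 1 - δ ^ 2 * z ^ 2 := by
  have h1 : δ * |z| ≤ Real.sin (Real.pi * |z|) :=
    sin_bound_aux hδ0 hδ1 (abs_nonneg z) hz
  have h5 : (δ * |z|) ^ 2 ≤ Real.sin (Real.pi * |z|) ^ 2 :=
    pow_le_pow_left₀ (by positivity) h1 2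
  have h2 : Real.sin (Real.pi * |z|) ^ 2 = Real.sin (Real.pi * z) ^ 2 := by
    rcases abs_choice z with h | h
    · rw [h]
    · rw [h, mul_neg, Real.sin_neg]; ring
  have h3 : Real.cos (2 * (Real.pi * z)) = 1 - 2 * Real.sin (Real.pi * z) ^ 2 := by
    have e1 := Real.cos_two_mul (Real.pi * z)
    have e2 := Real.sin_sq_add_cos_sq (Real.pi * z)
    nlinarith
  have h4 : 2 * Real.pi * z = 2 * (Real.pi * z) := by ring
  have h6 : (δ * |z|) ^ 2 = δ ^ 2 * z ^ 2 := by
    rw [mul_pow, sq_abs]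
  rw [h4, h3]
  nlinarith


private lemma main_aux {Ω : Type*} [MeasureSpace Ω] [IsProbabilityMeasure (ℙ : Measure Ω)]
    (A A' : Ω → ℝ) (hAm : Measurable A) (hA'm : Measurable A')
    (hindep : IndepFun A A' ℙ) (hident : IdentDistrib A A' ℙ ℙ)
    (hL2 : MemLp A 2 ℙ) {δ : ℝ} (hδ0 : 0 < δ) (hδ1 : δ < 1)
    (hsupp : ∀ᵐ ω ∂ℙ, |A ω - A' ω| ≤ 1 - δ) :
    (∫ ω, Real.cos (2 * Real.pi * A ω)) ^ 2 + (∫ ω, Real.sin (2 * Real.pi * A ω)) ^ 2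
      ≤ 1 - δ ^ 2 * (2 * variance A ℙ) := by
  have bdd_int : ∀ (f : Ω → ℝ), Measurable f → (∀ ω, |f ω| ≤ 1) → Integrable f ℙ :=
    fun f hf hb => ⟨hf.aestronglyMeasurable,
      HasFiniteIntegral.of_bounded (C := 1) (ae_of_all _ fun ω => by
        simpa [Real.norm_eq_abs] using hb ω)⟩
  have prod_le_one : ∀ x y : ℝ, |x| ≤ 1 → |y| ≤ 1 → |x * y| ≤ 1 := fun x y hx hy => by
    rw [abs_mul]; nlinarith [abs_nonneg x, abs_nonneg y]
  set uC : ℝ → ℝ := fun x => Real.cos (2 * Real.pi * x) with huC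
  set uS : ℝ → ℝ := fun x => Real.sin (2 * Real.pi * x) with huS
  have huCm : Measurable uC := (Real.continuous_cos.comp (continuous_const.mul continuous_id)).measurable
  have huSm : Measurable uS := (Real.continuous_sin.comp (continuous_const.mul continuous_id)).measurable
  have hCm : Measurable (uC ∘ A) := huCm.comp hAm
  have hC'm : Measurable (uC ∘ A') := huCm.comp hA'm
  have hSm : Measurable (uS ∘ A) := huSm.comp hAm
  have hS'm : Measurable (uS ∘ A') := huSm.comp hA'm
  have hCint : Integrable (uC ∘ A) ℙ := bdd_int _ hCm fun ω => Real.abs_cos_le_one _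
  have hC'int : Integrable (uC ∘ A') ℙ := bdd_int _ hC'm fun ω => Real.abs_cos_le_one _
  have hSint : Integrable (uS ∘ A) ℙ := bdd_int _ hSm fun ω => Real.abs_sin_le_one _
  have hS'int : Integrable (uS ∘ A') ℙ := bdd_int _ hS'm fun ω => Real.abs_sin_le_one _
  have hindepC : IndepFun (uC ∘ A) (uC ∘ A') ℙ := hindep.comp huCm huCm
  have hindepS : IndepFun (uS ∘ A) (uS ∘ A') ℙ := hindep.comp huSm huSm
  have hidentC : IdentDistrib (uC ∘ A) (uC ∘ A') ℙ ℙ := hident.comp huCm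
  have hidentS : IdentDistrib (uS ∘ A) (uS ∘ A') ℙ ℙ := hident.comp huSm
  -- squares as products
  have hc2 : (∫ ω, Real.cos (2 * Real.pi * A ω)) ^ 2
      = ∫ ω, (uC ∘ A) ω * (uC ∘ A') ω := by
    have h1 : (∫ ω, Real.cos (2 * Real.pi * A ω)) = ∫ ω, (uC ∘ A) ω := rfl
    have h2 : (∫ ω, (uC ∘ A) ω) = ∫ ω, (uC ∘ A') ω := hidentC.integral_eq
    have h3 := hindepC.integral_mul_eq_mul_integral hCint.aestronglyMeasurable hC'int.aestronglyMeasurable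
    rw [h1, sq]
    nth_rewrite 2 [h2]
    exact h3.symm
  have hs2 : (∫ ω, Real.sin (2 * Real.pi * A ω)) ^ 2
      = ∫ ω, (uS ∘ A) ω * (uS ∘ A') ω := by
    have h2 : (∫ ω, (uS ∘ A) ω) = ∫ ω, (uS ∘ A') ω := hidentS.integral_eq
    have h3 := hindepS.integral_mul_eq_mul_integral hSint.aestronglyMeasurable hS'int.aestronglyMeasurable
    rw [show (∫ ω, Real.sin (2 * Real.pi * A ω)) = ∫ ω, (uS ∘ A) ω from rfl, sq]
    nth_rewrite 2 [h2]
    exact h3.symm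
  have hCCint : Integrable (fun ω => (uC ∘ A) ω * (uC ∘ A') ω) ℙ :=
    bdd_int _ (hCm.mul hC'm) fun ω =>
      prod_le_one _ _ (Real.abs_cos_le_one _) (Real.abs_cos_le_one _)
  have hSSint : Integrable (fun ω => (uS ∘ A) ω * (uS ∘ A') ω) ℙ :=
    bdd_int _ (hSm.mul hS'm) fun ω =>
      prod_le_one _ _ (Real.abs_sin_le_one _) (Real.abs_sin_le_one _)
  -- sum equals integral of cos of difference
  have hsum : (∫ ω, Real.cos (2 * Real.pi * A ω)) ^ 2
        + (∫ ω, Real.sin (2 * Real.pi * A ω)) ^ 2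
      = ∫ ω, Real.cos (2 * Real.pi * (A ω - A' ω)) := by
    rw [hc2, hs2, ← integral_add hCCint hSSint]
    apply integral_congr_ae
    filter_upwards with ω
    have h : 2 * Real.pi * (A ω - A' ω) = 2 * Real.pi * A ω - 2 * Real.pi * A' ω := by ring
    rw [h, Real.cos_sub]
    rfl
  -- integrability of the quadratic bound
  have hsq : Integrable (fun ω => (A ω - A' ω) ^ 2) ℙ :=
    ⟨((hAm.sub hA'm).pow_const 2).aestronglyMeasurable,
      HasFiniteIntegral.of_bounded (C := 1) (hsupp.mono fun ω hω => by
        rw [Real.norm_eq_abs, abs_pow, sq_abs, ← sq_abs]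
        nlinarith [abs_nonneg (A ω - A' ω)])⟩
  have hRHSint : Integrable (fun ω => 1 - δ ^ 2 * (A ω - A' ω) ^ 2) ℙ :=
    (integrable_const 1).sub (hsq.const_mul _)
  have hcosYint : Integrable (fun ω => Real.cos (2 * Real.pi * (A ω - A' ω))) ℙ :=
    bdd_int _ (huCm.comp (hAm.sub hA'm)) fun ω => Real.abs_cos_le_one _
  -- pointwise bound
  have hmono : (∫ ω, Real.cos (2 * Real.pi * (A ω - A' ω)))
      ≤ ∫ ω, (1 - δ ^ 2 * (A ω - A' ω) ^ 2) := by
    apply integral_mono_ae hcosYint hRHSint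
    filter_upwards [hsupp] with ω hω
    exact cos_bound_aux hδ0 hδ1 hω
  -- compute the right-hand side
  have hL2' : MemLp A' 2 ℙ := hident.memLp_snd hL2
  have hAint : Integrable A ℙ := hL2.integrable one_le_two
  have hA'int : Integrable A' ℙ := hL2'.integrable one_le_two
  have hEA' : (∫ ω, A' ω) = ∫ ω, A ω := hident.integral_eq.symm
  have hEA2 : (∫ ω, A' ω ^ 2) = ∫ ω, A ω ^ 2 :=
    ((hident.comp (measurable_id.pow_const 2)).integral_eq).symm
  have hAA' : (∫ ω, A ω * A' ω) = (∫ ω, A ω) * ∫ ω, A' ω :=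
    hindep.integral_mul_eq_mul_integral hAint.aestronglyMeasurable hA'int.aestronglyMeasurable
  have iAB : Integrable (fun ω => A ω * A' ω) ℙ := hindep.integrable_mul hAint hA'int
  have hsqexp : (∫ ω, (A ω - A' ω) ^ 2) = 2 * variance A ℙ := by
    have e : (fun ω => (A ω - A' ω) ^ 2)
        = fun ω => A ω ^ 2 + A' ω ^ 2 - 2 * (A ω * A' ω) := by
      funext ω; ring
    have hsqA : Integrable (fun ω => A ω ^ 2) ℙ := hL2.integrable_sq
    have hsqA' : Integrable (fun ω => A' ω ^ 2) ℙ := hL2'.integrable_sq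
    have h1 : Integrable (fun ω => A ω ^ 2 + A' ω ^ 2) ℙ := hsqA.add hsqA'
    have h2 : Integrable (fun ω => 2 * (A ω * A' ω)) ℙ := iAB.const_mul 2
    rw [e, integral_sub h1 h2, integral_add hsqA hsqA', integral_const_mul, hAA',
      hEA', hEA2]
    have hv := variance_eq_sub hL2
    simp only [Pi.pow_apply] at hv
    rw [hv]
    ring
  have hRHSval : (∫ ω, (1 - δ ^ 2 * (A ω - A' ω) ^ 2))
      = 1 - δ ^ 2 * (2 * variance A ℙ) := by
    rw [integral_sub (integrable_const 1) (hsq.const_mul _), integral_const,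
      integral_const_mul, hsqexp]
    simp
  rw [hsum]
  rw [hRHSval] at hmono
  exact hmono

/-- If `X` is an integer-valued random variable, `X'` an independent copy of `X`,
`δ ∈ (0,1)` and `ξ ∈ ℝ` is such that `ξ·(X − X') ∈ [−(1−δ), 1−δ]` almost surely, then
`|E[exp(−2πi ξ X)]|² ≤ exp(−δ² · 2·Var[ξ X])`. -/
theorem stmt3 {Ω : Type*} [MeasureSpace Ω] [IsProbabilityMeasure (ℙ : Measure Ω)]
    (X X' : Ω → ℤ) (hX : Measurable X) (hX' : Measurable X')
    (hindep : IndepFun X X' ℙ) (hident : IdentDistrib X X' ℙ ℙ)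
    (δ ξ : ℝ) (hδ0 : 0 < δ) (hδ1 : δ < 1)
    (hsupp : ∀ᵐ ω ∂ℙ, |ξ * ((X ω : ℝ) - (X' ω : ℝ))| ≤ 1 - δ) :
    ‖∫ ω, Complex.exp (-(2 * Real.pi * Complex.I) * (ξ * (X ω : ℝ)))‖ ^ 2
      ≤ Real.exp (-(δ ^ 2 * (2 * variance (fun ω => ξ * (X ω : ℝ)) ℙ))) := by
  have hu : Measurable (fun n : ℤ => ξ * (n : ℝ)) := measurable_of_countable _
  have hAm : Measurable (fun ω => ξ * (X ω : ℝ)) := hu.comp hX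
  have hA'm : Measurable (fun ω => ξ * (X' ω : ℝ)) := hu.comp hX'
  by_cases hL2 : MemLp (fun ω => ξ * (X ω : ℝ)) 2 ℙ
  · -- main case
    have hindepA : IndepFun (fun ω => ξ * (X ω : ℝ)) (fun ω => ξ * (X' ω : ℝ)) ℙ :=
      hindep.comp hu hu
    have hidentA : IdentDistrib (fun ω => ξ * (X ω : ℝ)) (fun ω => ξ * (X' ω : ℝ)) ℙ ℙ :=
      hident.comp hu
    have hsuppA : ∀ᵐ ω ∂ℙ, |(fun ω => ξ * (X ω : ℝ)) ω - (fun ω => ξ * (X' ω : ℝ)) ω| ≤ 1 - δ := by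
      filter_upwards [hsupp] with ω hω
      simpa [mul_sub] using hω
    have key : (∫ ω, Real.cos (2 * Real.pi * (ξ * (X ω : ℝ)))) ^ 2
          + (∫ ω, Real.sin (2 * Real.pi * (ξ * (X ω : ℝ)))) ^ 2
        ≤ 1 - δ ^ 2 * (2 * variance (fun ω => ξ * (X ω : ℝ)) ℙ) :=
      main_aux _ _ hAm hA'm hindepA hidentA hL2 hδ0 hδ1 hsuppA
    have hexp : ∀ r : ℝ, Complex.exp (-(2 * (Real.pi : ℂ) * Complex.I) * (r : ℂ))
        = ((Real.cos (2 * Real.pi * r) : ℝ) : ℂ)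
          - ((Real.sin (2 * Real.pi * r) : ℝ) : ℂ) * Complex.I := by
      intro r
      have h : -(2 * (Real.pi : ℂ) * Complex.I) * (r : ℂ)
          = ((-(2 * Real.pi * r) : ℝ) : ℂ) * Complex.I := by push_cast; ring
      rw [h, Complex.exp_mul_I, ← Complex.ofReal_cos, ← Complex.ofReal_sin]
      simp [Real.cos_neg, Real.sin_neg]
      ring
    have hCint : Integrable (fun ω => Real.cos (2 * Real.pi * (ξ * (X ω : ℝ)))) ℙ :=
      ⟨(Real.measurable_cos.comp (hAm.const_mul _)).aestronglyMeasurable,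
        HasFiniteIntegral.of_bounded (C := 1) (ae_of_all _ fun ω => by
          simpa [Real.norm_eq_abs] using Real.abs_cos_le_one _)⟩
    have hSint : Integrable (fun ω => Real.sin (2 * Real.pi * (ξ * (X ω : ℝ)))) ℙ :=
      ⟨(Real.measurable_sin.comp (hAm.const_mul _)).aestronglyMeasurable,
        HasFiniteIntegral.of_bounded (C := 1) (ae_of_all _ fun ω => by
          simpa [Real.norm_eq_abs] using Real.abs_sin_le_one _)⟩
    have hCoint : Integrable (fun ω => Complex.ofReal (Real.cos (2 * Real.pi * (ξ * (X ω : ℝ))))) ℙ :=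
      hCint.ofReal
    have hSoint : Integrable (fun ω => Complex.ofReal (Real.sin (2 * Real.pi * (ξ * (X ω : ℝ)))) * Complex.I) ℙ :=
      hSint.ofReal.mul_const Complex.I
    have hIeq : (∫ ω, Complex.exp (-(2 * (Real.pi : ℂ) * Complex.I) * ((ξ : ℂ) * ((X ω : ℝ) : ℂ))))
        = Complex.ofReal (∫ ω, Real.cos (2 * Real.pi * (ξ * (X ω : ℝ))))
          - Complex.ofReal (∫ ω, Real.sin (2 * Real.pi * (ξ * (X ω : ℝ)))) * Complex.I := by
      simp_rw [← Complex.ofReal_mul, hexp]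
      rw [integral_sub hCoint hSoint, integral_mul_const]
      congr 1
      · exact integral_ofReal
      · congr 1
        exact integral_ofReal
    rw [hIeq]
    have habs2 : ∀ c s : ℝ, ‖Complex.ofReal c - Complex.ofReal s * Complex.I‖ ^ 2
        = c ^ 2 + s ^ 2 := by
      intro c s
      rw [Complex.sq_norm]
      simp [Complex.normSq_apply]
      ring
    rw [habs2]
    calc (∫ ω, Real.cos (2 * Real.pi * (ξ * (X ω : ℝ)))) ^ 2
          + (∫ ω, Real.sin (2 * Real.pi * (ξ * (X ω : ℝ)))) ^ 2
        ≤ 1 - δ ^ 2 * (2 * variance (fun ω => ξ * (X ω : ℝ)) ℙ) := key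
      _ ≤ Real.exp (-(δ ^ 2 * (2 * variance (fun ω => ξ * (X ω : ℝ)) ℙ))) := by
        have := Real.add_one_le_exp (-(δ ^ 2 * (2 * variance (fun ω => ξ * (X ω : ℝ)) ℙ)))
        linarith
  · -- degenerate case
    have hvar : variance (fun ω => ξ * (X ω : ℝ)) ℙ = 0 := by
      rw [ProbabilityTheory.variance,
        evariance_eq_top hAm.aestronglyMeasurable hL2, ENNReal.toReal_top]
    rw [hvar]
    simp only [mul_zero, neg_zero, Real.exp_zero]
    have hb : ‖∫ ω, Complex.exp (-(2 * (Real.pi : ℂ) * Complex.I) * ((ξ : ℂ) * ((X ω : ℝ) : ℂ)))‖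
        ≤ 1 := by
      refine le_trans (norm_integral_le_of_norm_le_const (C := 1) (ae_of_all _ fun ω => ?_)) (by simp)
      rw [Complex.norm_exp]
      simp [Complex.mul_re]
    calc ‖∫ ω, Complex.exp (-(2 * (Real.pi : ℂ) * Complex.I) * ((ξ : ℂ) * ((X ω : ℝ) : ℂ)))‖ ^ 2
        ≤ 1 ^ 2 := by apply pow_le_pow_left₀ (norm_nonneg _) hb
      _ = 1 := one_pow 2
end

section
/- Let X be an (n,k)-PMD with mean μ and covariance matrix Σ, and let 0 < ε < 1. Define the positive-definite matrix Σ̃ = k·ln(k/ε)·Σ + k²·ln²(k/ε)·I. Then with probability at least 1 − ε/10 over X, one has (X − μ)ᵀ Σ̃⁻¹ (X − μ) = O(1), where the implied constant is universal. -/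
/-!
Write `L = log (k / ε)` and `Σ̃ = k L Σ + k² L² I`. In an orthonormal eigenbasis `u_j` of `Σ̃`
(which also diagonalises `Σ`) the eigenvalues are `m_j = k L ν_j + k² L²` with
`ν_j = u_jᵀ Σ u_j`, and `(X - μ)ᵀ Σ̃⁻¹ (X - μ) = ∑_j (u_j ⬝ (X - μ))² / m_j`.
Each projection `u_j ⬝ (X - μ)` is a sum of `n` independent centred summands bounded by `2`
with total variance `ν_j`, so Bernstein's inequality makes `(u_j ⬝ (X - μ))² ≥ 1000 m_j / k`
an event of probability at most `ε / (10 k)`. Off the union of these `k` events every term of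
the sum is below `1000 / k`, so the quadratic form is at most `1000`.
For `k ≤ 1` the vector `X - μ` vanishes identically.
-/

open MeasureTheory ProbabilityTheory Matrix Real

lemma Real.exp_le_one_add_add_sq {x : ℝ} (hx : |x| ≤ 1) : exp x ≤ 1 + x + x ^ 2 := by
  linarith [(abs_le.1 (abs_exp_sub_one_sub_id_le hx)).2]

section Spectral

variable {κ : Type*} [Fintype κ] [DecidableEq κ] {A : Matrix κ κ ℝ}

lemma Matrix.IsHermitian.dotProduct_self_eigenvectorBasis (hA : A.IsHermitian) (j : κ) :
    (hA.eigenvectorBasis j).ofLp ⬝ᵥ (hA.eigenvectorBasis j).ofLp = 1 := by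
  have h := real_inner_self_eq_norm_sq (hA.eigenvectorBasis j)
  rw [hA.eigenvectorBasis.orthonormal.1 j, one_pow, EuclideanSpace.inner_eq_star_dotProduct] at h
  simpa using h

lemma Matrix.IsHermitian.eigenvalues_eq_dotProduct_mulVec (hA : A.IsHermitian) (j : κ) :
    hA.eigenvalues j =
      (hA.eigenvectorBasis j).ofLp ⬝ᵥ (A *ᵥ (hA.eigenvectorBasis j).ofLp) := by
  simpa using hA.eigenvalues_eq j

lemma Matrix.IsHermitian.eigenvalues_smul_add_smul_one {S : Matrix κ κ ℝ} {a b : ℝ}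
    (hA : (a • S + b • 1).IsHermitian) (j : κ) :
    hA.eigenvalues j =
      a * ((hA.eigenvectorBasis j).ofLp ⬝ᵥ (S *ᵥ (hA.eigenvectorBasis j).ofLp)) + b := by
  rw [hA.eigenvalues_eq_dotProduct_mulVec, add_mulVec, smul_mulVec, smul_mulVec, one_mulVec,
    dotProduct_add, dotProduct_smul, dotProduct_smul, hA.dotProduct_self_eigenvectorBasis,
    smul_eq_mul, smul_eq_mul, mul_one]

theorem Matrix.IsHermitian.dotProduct_inv_mulVec_eq_sum (hA : A.IsHermitian)
    (hA0 : ∀ j, hA.eigenvalues j ≠ 0) (v : κ → ℝ) :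
    v ⬝ᵥ (A⁻¹ *ᵥ v) = ∑ j, ((hA.eigenvectorBasis j).ofLp ⬝ᵥ v) ^ 2 / hA.eigenvalues j := by
  set u := fun j => (hA.eigenvectorBasis j).ofLp
  set m := hA.eigenvalues
  have hdet : IsUnit A.det := by
    rw [hA.det_eq_prod_eigenvalues]
    exact (Finset.prod_ne_zero_iff.2 fun j _ => by simpa using hA0 j).isUnit
  have hv : v = ∑ j, (u j ⬝ᵥ v) • u j := by
    simpa [EuclideanSpace.inner_eq_star_dotProduct, dotProduct_comm, u] using
      congrArg WithLp.ofLp (hA.eigenvectorBasis.sum_repr' (WithLp.toLp 2 v)).symm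
  have hinv : ∀ j, A⁻¹ *ᵥ u j = (m j)⁻¹ • u j := fun j => by
    rw [eq_inv_smul_iff₀ (hA0 j), ← mulVec_smul, ← hA.mulVec_eigenvectorBasis, mulVec_mulVec,
      nonsing_inv_mul A hdet, one_mulVec]
  nth_rewrite 2 [hv]
  simp only [mulVec_sum, mulVec_smul, hinv, dotProduct_sum, dotProduct_smul, smul_eq_mul]
  refine Finset.sum_congr rfl fun j _ => ?_
  rw [dotProduct_comm v]
  ring

lemma Matrix.IsHermitian.dotProduct_inv_mulVec_le_of_forall_sq_lt (hA : A.IsHermitian)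
    (hpos : ∀ j, 0 < hA.eigenvalues j) {C : ℝ} (hC : 0 ≤ C) {v : κ → ℝ}
    (hv : ∀ j, ((hA.eigenvectorBasis j).ofLp ⬝ᵥ v) ^ 2 < C * hA.eigenvalues j / Fintype.card κ) :
    v ⬝ᵥ (A⁻¹ *ᵥ v) ≤ C := by
  rw [hA.dotProduct_inv_mulVec_eq_sum fun j => (hpos j).ne']
  calc ∑ j, ((hA.eigenvectorBasis j).ofLp ⬝ᵥ v) ^ 2 / hA.eigenvalues j
      ≤ ∑ _j : κ, C / Fintype.card κ := Finset.sum_le_sum fun j _ => by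
        rw [div_le_iff₀ (hpos j), div_mul_eq_mul_div]; exact (hv j).le
    _ ≤ C := by
        rcases (Fintype.card κ).eq_zero_or_pos with h | h
        · simp [h, hC]
        · have : (Fintype.card κ : ℝ) ≠ 0 := (Nat.cast_pos.2 h).ne'
          simp [mul_div_cancel₀, this]

end Spectral

section Concentration

variable {Ω ι κ : Type*} [MeasurableSpace Ω] {P : Measure Ω}

lemma dotProduct_mulVec_eq_integral_sq [Fintype κ] {V : Ω → κ → ℝ}
    (hV : ∀ a, MemLp (fun ω => V ω a) 2 P) {S : Matrix κ κ ℝ}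
    (hS : ∀ a b, S a b = ∫ ω, V ω a * V ω b ∂P) (z : κ → ℝ) :
    z ⬝ᵥ (S *ᵥ z) = ∫ ω, (z ⬝ᵥ V ω) ^ 2 ∂P := by
  have hint : ∀ a b, Integrable (fun ω => z a * z b * (V ω a * V ω b)) P := fun a b =>
    ((hV a).integrable_mul (hV b)).const_mul _
  have hpt : ∀ ω, (z ⬝ᵥ V ω) ^ 2 = ∑ a, ∑ b, z a * z b * (V ω a * V ω b) := fun ω => by
    simp only [sq, dotProduct, Finset.sum_mul_sum]
    exact Finset.sum_congr rfl fun a _ => Finset.sum_congr rfl fun b _ => by ring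
  simp_rw [hpt]
  rw [integral_finsetSum _ fun a _ => integrable_finsetSum _ fun b _ => hint a b]
  simp_rw [integral_finsetSum _ fun b _ => hint _ b, integral_const_mul, ← hS]
  simp only [dotProduct, mulVec, Finset.mul_sum]
  exact Finset.sum_congr rfl fun a _ => Finset.sum_congr rfl fun b _ => by ring

variable [IsProbabilityMeasure P]

lemma integrable_of_abs_le {Y : Ω → ℝ} (hY : Measurable Y) {b : ℝ} (hb : ∀ ω, |Y ω| ≤ b) :
    Integrable Y P :=
  .of_bound hY.aestronglyMeasurable b (ae_of_all _ hb)

lemma one_sub_sum_le_measureReal_of_compl_iUnion_subset [Fintype ι] {A : ι → Set Ω}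
    {B : Set Ω} (hAB : (⋃ i, A i)ᶜ ⊆ B) : 1 - ∑ i, P.real (A i) ≤ P.real B := by
  have h := measureReal_union_le (μ := P) (⋃ i, A i) (⋃ i, A i)ᶜ
  rw [Set.union_compl_self, probReal_univ] at h
  linarith [measureReal_iUnion_fintype_le (μ := P) A, measureReal_mono (μ := P) hAB]

theorem Matrix.IsHermitian.one_sub_sum_le_measureReal_dotProduct_inv_mulVec_le [Fintype κ]
    [DecidableEq κ] {A : Matrix κ κ ℝ} (hA : A.IsHermitian) (hpos : ∀ j, 0 < hA.eigenvalues j)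
    {C : ℝ} (hC : 0 ≤ C) (V : Ω → κ → ℝ) :
    1 - ∑ j, P.real {ω | √(C * hA.eigenvalues j / Fintype.card κ) ≤
        |(hA.eigenvectorBasis j).ofLp ⬝ᵥ V ω|} ≤
      P.real {ω | V ω ⬝ᵥ (A⁻¹ *ᵥ V ω) ≤ C} :=
  one_sub_sum_le_measureReal_of_compl_iUnion_subset fun ω hω => by
    simp only [Set.mem_compl_iff, Set.mem_iUnion, not_exists] at hω
    exact hA.dotProduct_inv_mulVec_le_of_forall_sq_lt hpos hC fun j => by
      simpa [sq_abs] using (Real.lt_sqrt (abs_nonneg _)).1 (not_le.1 (hω j))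

lemma mgf_le_exp_mul_integral_sq {Y : Ω → ℝ} (hY : Measurable Y) {b t : ℝ}
    (hb : ∀ ω, |Y ω| ≤ b) (h0 : P[Y] = 0) (ht : 0 ≤ t) (htb : t * b ≤ 1) :
    mgf Y P t ≤ exp (t ^ 2 * ∫ ω, Y ω ^ 2 ∂P) := by
  have htY : ∀ ω, |t * Y ω| ≤ 1 := fun ω => by
    rw [abs_mul, abs_of_nonneg ht]; exact (mul_le_mul_of_nonneg_left (hb ω) ht).trans htb
  have hYi : Integrable Y P := integrable_of_abs_le hY hb
  have hY2i : Integrable (fun ω => Y ω ^ 2) P :=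
    integrable_of_abs_le (b := b ^ 2) (hY.pow_const 2) fun ω => by
      rw [abs_pow]; exact pow_le_pow_left₀ (abs_nonneg _) (hb ω) 2
  have hpoly : Integrable (fun ω => 1 + t * Y ω + t ^ 2 * Y ω ^ 2) P :=
    ((integrable_const 1).add (hYi.const_mul t)).add (hY2i.const_mul _)
  calc mgf Y P t ≤ ∫ ω, (1 + t * Y ω + t ^ 2 * Y ω ^ 2) ∂P :=
        integral_mono (integrable_of_abs_le (b := exp 1) (hY.const_mul t).exp fun ω => by
          rw [abs_of_pos (exp_pos _)]; exact exp_le_exp.2 (le_of_abs_le (htY ω)))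
          hpoly fun ω => by simpa [mul_pow] using exp_le_one_add_add_sq (htY ω)
    _ = 1 + t ^ 2 * ∫ ω, Y ω ^ 2 ∂P := by
        rw [integral_add (f := fun ω => 1 + t * Y ω) ((integrable_const 1).add (hYi.const_mul t))
            (hY2i.const_mul _), integral_add (f := fun _ => (1 : ℝ)) (integrable_const 1)
            (hYi.const_mul t), integral_const_mul, integral_const_mul, h0]
        simp
    _ ≤ exp (t ^ 2 * ∫ ω, Y ω ^ 2 ∂P) := by linarith [add_one_le_exp (t ^ 2 * ∫ ω, Y ω ^ 2 ∂P)]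

variable [Fintype ι] {Y : ι → Ω → ℝ} {b : ℝ}

lemma ProbabilityTheory.iIndepFun.measureReal_sum_ge_le_exp (hY : ∀ i, Measurable (Y i))
    (hind : iIndepFun Y P) (hb : ∀ i ω, |Y i ω| ≤ b) (h0 : ∀ i, P[Y i] = 0) {t : ℝ} (ht : 0 ≤ t)
    (htb : t * b ≤ 1) (s : ℝ) :
    P.real {ω | s ≤ ∑ i, Y i ω} ≤ exp (t ^ 2 * ∑ i, ∫ ω, Y i ω ^ 2 ∂P - t * s) := by
  have hexp_int : ∀ i ∈ Finset.univ, Integrable (fun ω => exp (t * Y i ω)) P := fun i _ =>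
    integrable_of_abs_le (b := exp (t * b)) ((hY i).const_mul t).exp fun ω => by
      rw [abs_of_pos (exp_pos _)]
      exact exp_le_exp.2 (mul_le_mul_of_nonneg_left (le_of_abs_le (hb i ω)) ht)
  calc P.real {ω | s ≤ ∑ i, Y i ω} = P.real {ω | s ≤ (∑ i, Y i) ω} := by simp [Finset.sum_apply]
    _ ≤ exp (-t * s) * mgf (∑ i, Y i) P t :=
        measure_ge_le_exp_mul_mgf s ht (hind.integrable_exp_mul_sum hY hexp_int)
    _ ≤ exp (-t * s) * exp (t ^ 2 * ∑ i, ∫ ω, Y i ω ^ 2 ∂P) := by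
        rw [hind.mgf_sum hY, Finset.mul_sum, exp_sum]
        gcongr with i
        · exact fun i _ => mgf_nonneg
        · exact mgf_le_exp_mul_integral_sq (hY i) (hb i) (h0 i) ht htb
    _ = exp (t ^ 2 * ∑ i, ∫ ω, Y i ω ^ 2 ∂P - t * s) := by rw [← exp_add]; ring_nf

theorem ProbabilityTheory.iIndepFun.measureReal_sum_ge_le_bernstein (hY : ∀ i, Measurable (Y i))
    (hind : iIndepFun Y P) (hb0 : 0 ≤ b) (hb : ∀ i ω, |Y i ω| ≤ b) (h0 : ∀ i, P[Y i] = 0)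
    {s : ℝ} (hs : 0 ≤ s) :
    P.real {ω | s ≤ ∑ i, Y i ω} ≤
      exp (-(s ^ 2 / (4 * ∑ i, ∫ ω, Y i ω ^ 2 ∂P + 2 * b * s))) := by
  set V := ∑ i, ∫ ω, Y i ω ^ 2 ∂P
  have hV : 0 ≤ V := Finset.sum_nonneg fun i _ => integral_nonneg fun ω => sq_nonneg _
  set D := 2 * V + b * s
  have hD : 0 ≤ D := by positivity
  -- `t = s / D` interpolates between the optimal `s / (2 V)` and the largest admissible `1 / b`
  have htb : s / D * b ≤ 1 := by
    rcases hD.eq_or_lt with hD0 | hDpos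
    · simp [← hD0]
    · rw [div_mul_eq_mul_div, div_le_one hDpos]; linarith [mul_comm s b]
  refine (hind.measureReal_sum_ge_le_exp hY hb h0 (by positivity) htb s).trans
    (exp_le_exp.2 ?_)
  rw [show 4 * V + 2 * b * s = 2 * D by ring]
  rcases hD.eq_or_lt with hD0 | hDpos
  · simp [← hD0]
  · rw [div_pow, ← sub_nonneg]
    have : -(s ^ 2 / (2 * D)) - (s ^ 2 / D ^ 2 * V - s / D * s) =
        s ^ 2 * (b * s) / (2 * D ^ 2) := by
      field_simp; ring
    rw [this]; positivity

theorem ProbabilityTheory.iIndepFun.measureReal_abs_sum_ge_le_bernstein (hY : ∀ i, Measurable (Y i))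
    (hind : iIndepFun Y P) (hb0 : 0 ≤ b) (hb : ∀ i ω, |Y i ω| ≤ b) (h0 : ∀ i, P[Y i] = 0)
    {s : ℝ} (hs : 0 ≤ s) :
    P.real {ω | s ≤ |∑ i, Y i ω|} ≤
      2 * exp (-(s ^ 2 / (4 * ∑ i, ∫ ω, Y i ω ^ 2 ∂P + 2 * b * s))) := by
  have hneg := iIndepFun.measureReal_sum_ge_le_bernstein (Y := fun i ω => -Y i ω)
    (fun i => (hY i).neg) (hind.comp (fun _ x => -x) fun _ => measurable_neg) hb0
    (fun i ω => by simpa using hb i ω) (fun i => by simp [integral_neg, h0 i]) hs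
  simp only [neg_sq, Finset.sum_neg_distrib] at hneg
  calc P.real {ω | s ≤ |∑ i, Y i ω|}
      ≤ P.real ({ω | s ≤ ∑ i, Y i ω} ∪ {ω | s ≤ -∑ i, Y i ω}) :=
        measureReal_mono fun ω (hω : s ≤ |_|) => le_abs.1 hω
    _ ≤ _ := (measureReal_union_le _ _).trans
        (by linarith [hind.measureReal_sum_ge_le_bernstein hY hb0 hb h0 hs])

lemma ProbabilityTheory.iIndepFun.integral_sum_sq (hY : ∀ i, MemLp (Y i) 2 P)
    (hind : iIndepFun Y P) (h0 : ∀ i, P[Y i] = 0) :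
    ∫ ω, (∑ i, Y i ω) ^ 2 ∂P = ∑ i, ∫ ω, Y i ω ^ 2 ∂P := by
  have hsum := IndepFun.variance_sum (s := Finset.univ) (fun i _ => hY i)
    fun i _ j _ hij => hind.indepFun hij
  have hsum0 : P[∑ i, Y i] = 0 := by
    simp only [Finset.sum_apply]
    rw [integral_finsetSum _ fun i _ => (hY i).integrable one_le_two]; simp [h0]
  rw [variance_of_integral_eq_zero (memLp_finsetSum' _ fun i _ => hY i).aemeasurable hsum0] at hsum
  simpa [Finset.sum_apply, variance_of_integral_eq_zero (hY _).aemeasurable (h0 _)] using hsum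

end Concentration

section SimplexValued

variable {Ω ι κ : Type*} [MeasurableSpace Ω] {P : Measure Ω} [IsProbabilityMeasure P]
  [Fintype κ]

lemma abs_le_one_of_dotProduct_self_eq_one {u : κ → ℝ} (hu : u ⬝ᵥ u = 1) (a : κ) : |u a| ≤ 1 := by
  rw [← sq_le_one_iff_abs_le_one, ← hu, sq]
  exact Finset.single_le_sum (f := fun a => u a * u a) (fun a _ => mul_self_nonneg _)
    (Finset.mem_univ a)

lemma abs_dotProduct_le_one_of_mem_stdSimplex {u x : κ → ℝ} (hu : ∀ a, |u a| ≤ 1)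
    (hx : x ∈ stdSimplex ℝ κ) : |u ⬝ᵥ x| ≤ 1 :=
  calc |u ⬝ᵥ x| ≤ ∑ a, |u a| * x a := by
        simpa only [dotProduct, abs_mul, abs_of_nonneg (hx.1 _)] using
          Finset.abs_sum_le_sum_abs (fun a => u a * x a) Finset.univ
    _ ≤ ∑ a, x a := Finset.sum_le_sum fun a _ => mul_le_of_le_one_left (hx.1 a) (hu a)
    _ = 1 := hx.2

variable {X : ι → Ω → κ → ℝ} {μ : κ → ℝ}

lemma memLp_apply_of_mem_stdSimplex (hXm : ∀ i, Measurable (X i))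
    (hX : ∀ i ω, X i ω ∈ stdSimplex ℝ κ) (q : ENNReal) (i : ι) (a : κ) :
    MemLp (fun ω => X i ω a) q P :=
  .of_bound ((measurable_pi_apply a).comp (hXm i)).aestronglyMeasurable 1 <| ae_of_all _ fun ω =>
    abs_le.2 ⟨by linarith [(hX i ω).1 a], mem_Icc_of_mem_stdSimplex (hX i ω) a |>.2⟩

lemma integral_apply_mem_stdSimplex (hXm : ∀ i, Measurable (X i))
    (hX : ∀ i ω, X i ω ∈ stdSimplex ℝ κ) (i : ι) : (fun a => ∫ ω, X i ω a ∂P) ∈ stdSimplex ℝ κ := by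
  refine ⟨fun a => integral_nonneg fun ω => (hX i ω).1 a, ?_⟩
  rw [← integral_finsetSum _ fun a _ =>
    (memLp_apply_of_mem_stdSimplex hXm hX 1 i a).integrable le_rfl]
  simp [(hX i _).2]

variable [Fintype ι]

theorem ProbabilityTheory.iIndepFun.measureReal_abs_dotProduct_sum_sub_ge_le
    (hXm : ∀ i, Measurable (X i)) (hind : iIndepFun X P) (hX : ∀ i ω, X i ω ∈ stdSimplex ℝ κ)
    (hμ : ∀ a, μ a = ∫ ω, ∑ i, X i ω a ∂P) {u : κ → ℝ} (hu : u ⬝ᵥ u = 1) {s : ℝ} (hs : 0 ≤ s) :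
    P.real {ω | s ≤ |u ⬝ᵥ fun a => ∑ i, X i ω a - μ a|} ≤
      2 * exp (-(s ^ 2 / (4 * ∫ ω, (u ⬝ᵥ fun a => ∑ i, X i ω a - μ a) ^ 2 ∂P + 4 * s))) := by
  set p : ι → κ → ℝ := fun i a => ∫ ω, X i ω a ∂P
  set Y : ι → Ω → ℝ := fun i ω => u ⬝ᵥ (X i ω - p i)
  have hXi i a := (memLp_apply_of_mem_stdSimplex (P := P) hXm hX 1 i a).integrable le_rfl
  have hYm : ∀ i, Measurable (Y i) := fun i => by fun_prop
  have hYb : ∀ i ω, |Y i ω| ≤ 2 := fun i ω => by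
    have hu1 := abs_le_one_of_dotProduct_self_eq_one hu
    calc |Y i ω| = |u ⬝ᵥ X i ω - u ⬝ᵥ p i| := by simp only [Y, dotProduct_sub]
      _ ≤ |u ⬝ᵥ X i ω| + |u ⬝ᵥ p i| := abs_sub _ _
      _ ≤ 1 + 1 := add_le_add (abs_dotProduct_le_one_of_mem_stdSimplex hu1 (hX i ω))
          (abs_dotProduct_le_one_of_mem_stdSimplex hu1 (integral_apply_mem_stdSimplex hXm hX i))
      _ = 2 := one_add_one_eq_two
  have hY0 : ∀ i, P[Y i] = 0 := fun i => by
    simp only [Y, dotProduct, Pi.sub_apply]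
    rw [integral_finsetSum _ fun a _ => by fun_prop]
    simp_rw [integral_const_mul]
    simp [integral_sub (hXi i _) (integrable_const _), p]
  have hsum : ∀ ω, (u ⬝ᵥ fun a => ∑ i, X i ω a - μ a) = ∑ i, Y i ω := fun ω => by
    simp only [Y, ← dotProduct_sum]
    congr 1; ext a
    simp [hμ a, p, integral_finsetSum _ fun i _ => hXi i a, Finset.sum_sub_distrib]
  have hYind : iIndepFun Y P := hind.comp (fun i x => u ⬝ᵥ (x - p i)) fun i => by fun_prop
  have hvar : ∫ ω, (u ⬝ᵥ fun a => ∑ i, X i ω a - μ a) ^ 2 ∂P = ∑ i, ∫ ω, Y i ω ^ 2 ∂P := by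
    simp_rw [hsum]
    exact hYind.integral_sum_sq (fun i => .of_bound (hYm i).aestronglyMeasurable 2
      (ae_of_all _ (hYb i))) hY0
  rw [hvar]
  simp_rw [hsum]
  convert hYind.measureReal_abs_sum_ge_le_bernstein hYm zero_le_two hYb hY0 hs using 5
  ring

lemma sum_apply_sub_eq_zero_of_subsingleton [Subsingleton κ] (hX : ∀ i ω, X i ω ∈ stdSimplex ℝ κ)
    (hμ : ∀ a, μ a = ∫ ω, ∑ i, X i ω a ∂P) (ω : Ω) : (fun a => ∑ i, X i ω a - μ a) = 0 := by
  ext a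
  have h1 : ∀ i ω, X i ω a = 1 := fun i ω => by
    rw [← (hX i ω).2, Fintype.sum_subsingleton _ a]
  simp [hμ, h1]

end SimplexValued

lemma two_mul_exp_neg_le_of_sq_eq {k ε ν s : ℝ} (hk : 2 ≤ k) (hε0 : 0 < ε) (hε1 : ε < 1)
    (hν : 0 ≤ ν) (hs : 0 ≤ s) (hs2 : s ^ 2 = 1000 * (log (k / ε) * ν + k * log (k / ε) ^ 2)) :
    2 * exp (-(s ^ 2 / (4 * ν + 4 * s))) ≤ ε / (10 * k) := by
  set L := log (k / ε)
  have hkε : 2 ≤ k / ε := (le_div_iff₀ hε0).2 (by nlinarith)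
  have hL : log 2 ≤ L := log_le_log two_pos hkε
  have hL0 : 0 < L := (log_pos one_lt_two).trans_le hL
  have hlog : log (20 * k / ε) ≤ 6 * L := by
    have h32 : (32 : ℝ) ≤ (k / ε) ^ 5 := by
      calc (32 : ℝ) = 2 ^ 5 := by norm_num
        _ ≤ (k / ε) ^ 5 := pow_le_pow_left₀ two_pos.le hkε 5
    calc log (20 * k / ε) ≤ log ((k / ε) ^ 6) :=
          log_le_log (by positivity) (by rw [pow_succ, mul_div_assoc]; nlinarith)
      _ = 6 * L := by rw [log_pow]; norm_num [L]
  have hs40 : 40 * L ≤ s :=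
    (pow_le_pow_iff_left₀ (by positivity) hs two_ne_zero).1 (by nlinarith [mul_nonneg hL0.le hν])
  have hD : 0 < 4 * ν + 4 * s := by nlinarith
  have hE : log (20 * k / ε) ≤ s ^ 2 / (4 * ν + 4 * s) := by
    rw [le_div_iff₀ hD]
    nlinarith [mul_nonneg hL0.le hν, mul_le_mul_of_nonneg_right hs40 hs]
  calc 2 * exp (-(s ^ 2 / (4 * ν + 4 * s))) ≤ 2 * exp (-log (20 * k / ε)) := by gcongr
    _ = ε / (10 * k) := by
        rw [Real.exp_neg, exp_log (by positivity)]
        field_simp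
        ring

/-- Let `X` be an `(n,k)`-PMD (sum of independent categorical random vectors) with mean `μ`
and covariance matrix `Σ`, and let `0 < ε < 1`. With
`Σ̃ = k·ln(k/ε)·Σ + k²·ln²(k/ε)·I`, with probability at least `1 − ε/10` over `X` one has
`(X − μ)ᵀ Σ̃⁻¹ (X − μ) = O(1)`, where the implied constant is universal. -/
theorem stmt5 :
    ∃ C : ℝ, 0 < C ∧
    ∀ (Ω : Type) [MeasurableSpace Ω] (P : Measure Ω), IsProbabilityMeasure P →
    ∀ (n k : ℕ) (ε : ℝ), 0 < ε → ε < 1 →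
    ∀ (X : Fin n → Ω → Fin k → ℝ),
      (∀ i, Measurable (X i)) →
      iIndepFun X P →
      (∀ i ω, ∃ j, X i ω = fun l => if l = j then (1 : ℝ) else 0) →
    ∀ (μv : Fin k → ℝ), (∀ j, μv j = ∫ ω, (∑ i, X i ω j) ∂P) →
    ∀ (S : Matrix (Fin k) (Fin k) ℝ),
      (∀ a b, S a b = ∫ ω, ((∑ i, X i ω a) - μv a) * ((∑ i, X i ω b) - μv b) ∂P) →
      P {ω | (fun j => (∑ i, X i ω j) - μv j) ⬝ᵥ
          ((((k : ℝ) * Real.log (k / ε)) • S +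
              ((k : ℝ) ^ 2 * (Real.log (k / ε)) ^ 2) • (1 : Matrix (Fin k) (Fin k) ℝ))⁻¹
            *ᵥ (fun j => (∑ i, X i ω j) - μv j)) ≤ C}
        ≥ ENNReal.ofReal (1 - ε / 10) := by
  refine ⟨1000, by norm_num, fun Ω _ P _ n k ε hε0 hε1 X hXm hind hXsupp μv hμv S hS => ?_⟩
  have hX : ∀ i ω, X i ω ∈ stdSimplex ℝ (Fin k) := fun i ω => by
    obtain ⟨j, hj⟩ := hXsupp i ω
    simpa only [hj, eq_comm] using ite_eq_mem_stdSimplex ℝ j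
  rw [ge_iff_le, ENNReal.ofReal_le_iff_le_toReal (measure_ne_top _ _), ← measureReal_def]
  set L := log (k / ε)
  set V : Ω → Fin k → ℝ := fun ω j => ∑ i, X i ω j - μv j
  obtain hk | hk := lt_or_ge k 2
  · have : Subsingleton (Fin k) := Fin.subsingleton_iff_le_one.2 (by omega)
    simp [sum_apply_sub_eq_zero_of_subsingleton hX hμv]
    linarith
  have hk2 : (2 : ℝ) ≤ k := by exact_mod_cast hk
  have hL : 0 < L := log_pos ((one_lt_div hε0).2 (by linarith))
  have hSh : S.IsHermitian := ext fun a b => by simp [hS, mul_comm]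
  have hM := (hSh.smul (.all (k * L))).add (isHermitian_one.smul (.all (k ^ 2 * L ^ 2)))
  have hVL2 : ∀ a, MemLp (fun ω => V ω a) 2 P := fun a =>
    (memLp_finsetSum _ fun i _ => memLp_apply_of_mem_stdSimplex hXm hX 2 i a).sub (memLp_const _)
  have hm : ∀ j, hM.eigenvalues j =
      k * L * ∫ ω, ((hM.eigenvectorBasis j).ofLp ⬝ᵥ V ω) ^ 2 ∂P + k ^ 2 * L ^ 2 := fun j => by
    rw [hM.eigenvalues_smul_add_smul_one, dotProduct_mulVec_eq_integral_sq hVL2 hS]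
  have hpos : ∀ j, 0 < hM.eigenvalues j := fun j => by rw [hm j]; positivity
  refine (hM.one_sub_sum_le_measureReal_dotProduct_inv_mulVec_le hpos (by norm_num) V).trans'
    (sub_le_sub_left ?_ 1)
  calc _ ≤ ∑ _j : Fin k, ε / (10 * k) := Finset.sum_le_sum fun j _ => ?_
    _ = ε / 10 := by simp; field_simp
  refine (hind.measureReal_abs_dotProduct_sum_sub_ge_le hXm hX hμv
    (hM.dotProduct_self_eigenvectorBasis j) (sqrt_nonneg _)).trans
    (two_mul_exp_neg_le_of_sq_eq hk2 hε0 hε1 (integral_nonneg fun _ => sq_nonneg _)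
      (sqrt_nonneg _) ?_)
  rw [sq_sqrt (by have := hpos j; positivity), hm j, Fintype.card_fin]
  field_simp
  ring
end

section
/- Let X be a k-maximal (n,k)-PMD with component probabilities p_{i,j} = Pr[X_i = e_j]. Then for all ξ ∈ [0,1]^k, all 1 ≤ i ≤ n, and all 1 ≤ j ≤ k−1, the Fourier transform of the i-th component satisfies |X̂_i(ξ)|² ≤ exp(−c·p_{i,j}·[ξ_j − ξ_k]²/k) for some universal constant c > 0, where [x] denotes the distance from x to the nearest integer. -/
/-!
Expanding the square, `|X̂_i(ξ)|² = 1 - Σ_{l,m} p_l p_m (1 - cos 2π(ξ_l - ξ_m))`, and every term of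
the defect sum is nonnegative, so it is at least the two terms with `{l, m} = {j, k}`. Since the
`k`-th coordinate is maximal, `p_k ≥ 1/k`, and `1 - cos 2πx ≥ 8 [x]²`; finally `1 - t ≤ exp (-t)`.
This gives the claim with `c = 16`.
-/

open Real Finset

theorem Real.eight_mul_sq_sub_round_le_one_sub_cos (d : ℝ) :
    8 * (d - round d) ^ 2 ≤ 1 - cos (2 * π * d) := by
  have hcos : cos (2 * π * d) = cos (2 * π * (d - round d)) := by
    rw [mul_sub, ← cos_sub_int_mul_two_pi _ (round d)]; ring_nf
  have hr : |2 * π * (d - round d)| ≤ π := by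
    rw [abs_mul, abs_of_pos (by positivity : 0 < 2 * π)]
    nlinarith [abs_sub_round d, pi_pos]
  have hjordan := cos_le_one_sub_mul_cos_sq hr
  rw [hcos]
  have hscale : 2 / π ^ 2 * (2 * π * (d - round d)) ^ 2 = 8 * (d - round d) ^ 2 := by
    field_simp; ring
  linarith

theorem norm_sq_sum_mul_exp_eq {ι : Type*} (s : Finset ι) (p ξ : ι → ℝ) :
    ‖∑ l ∈ s, (p l : ℂ) * Complex.exp (-(2 * π * Complex.I) * ξ l)‖ ^ 2
      = ∑ l ∈ s, ∑ m ∈ s, p l * p m * cos (2 * π * (ξ l - ξ m)) := by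
  rw [← Complex.ofReal_re (_ ^ 2), Complex.ofReal_pow, ← Complex.mul_conj', map_sum,
    sum_mul_sum, Complex.re_sum]
  refine sum_congr rfl fun l _ => ?_
  rw [Complex.re_sum]
  refine sum_congr rfl fun m _ => ?_
  have : (p l : ℂ) * Complex.exp (-(2 * π * Complex.I) * ξ l)
      * (starRingEnd ℂ) ((p m : ℂ) * Complex.exp (-(2 * π * Complex.I) * ξ m))
      = ((p l * p m : ℝ) : ℂ) * Complex.exp ((-(2 * π * (ξ l - ξ m)) : ℝ) * Complex.I) := by
    rw [map_mul, Complex.conj_ofReal, ← Complex.exp_conj]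
    simp only [map_mul, map_neg, map_ofNat, Complex.conj_ofReal, Complex.conj_I]
    push_cast
    rw [mul_mul_mul_comm, ← Complex.exp_add]
    ring_nf
  rw [this, Complex.re_ofReal_mul, Complex.exp_ofReal_mul_I_re, cos_neg]

theorem norm_sq_sum_mul_exp_le_one_sub {ι : Type*} [Fintype ι] {p : ι → ℝ} (ξ : ι → ℝ)
    (hp : ∀ l, 0 ≤ p l) (hsum : ∑ l, p l = 1) {j K : ι} (hjK : j ≠ K) :
    ‖∑ l, (p l : ℂ) * Complex.exp (-(2 * π * Complex.I) * ξ l)‖ ^ 2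
      ≤ 1 - 2 * p j * p K * (1 - cos (2 * π * (ξ j - ξ K))) := by
  classical
  set defect : ι × ι → ℝ := fun lm => p lm.1 * p lm.2 * (1 - cos (2 * π * (ξ lm.1 - ξ lm.2)))
  have hdefect_nonneg : ∀ lm, 0 ≤ defect lm := fun lm =>
    mul_nonneg (mul_nonneg (hp _) (hp _)) (sub_nonneg.2 (cos_le_one _))
  have hsplit : ‖∑ l, (p l : ℂ) * Complex.exp (-(2 * π * Complex.I) * ξ l)‖ ^ 2
      = 1 - ∑ lm, defect lm := by
    have hmass : ∑ l, ∑ m, p l * p m = 1 := by rw [← sum_mul_sum, hsum, one_mul]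
    rw [norm_sq_sum_mul_exp_eq, Fintype.sum_prod_type, ← hmass, ← sum_sub_distrib]
    refine sum_congr rfl fun l _ => ?_
    rw [← sum_sub_distrib]
    exact sum_congr rfl fun m _ => by ring
  have hpair : defect (j, K) + defect (K, j) ≤ ∑ lm, defect lm := by
    rw [← sum_pair (by simp [hjK] : (j, K) ≠ (K, j))]
    exact sum_le_sum_of_subset_of_nonneg (subset_univ _) fun lm _ _ => hdefect_nonneg lm
  have hsymm : defect (K, j) = defect (j, K) := by
    simp only [defect]; rw [← cos_neg]; ring_nf
  rw [hsplit]
  simp only [defect] at hpair hsymm ⊢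
  linarith

theorem inv_card_le_of_sum_eq_one_of_forall_le {ι : Type*} [Fintype ι] {p : ι → ℝ} (hsum : ∑ l, p l = 1)
    {K : ι} (hK : ∀ l, p l ≤ p K) : (Fintype.card ι : ℝ)⁻¹ ≤ p K := by
  have hcard : (0 : ℝ) < Fintype.card ι := by exact_mod_cast Fintype.card_pos_iff.2 ⟨K⟩
  rw [inv_le_iff_one_le_mul₀ hcard, ← hsum]
  simpa [mul_comm] using sum_le_card_nsmul univ p (p K) fun l _ => hK l

/-- Let `X` be a `k`-maximal `(n,k)`-PMD with component probabilities
`p_{i,j} = Pr[X_i = e_j]` (here we state the claim for a single `k`-maximal component,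
whose maximal coordinate is the `k`-th, i.e. the last one). There is a universal constant
`c > 0` such that for all `ξ ∈ [0,1]^k` and all `1 ≤ j ≤ k−1`,
`|X̂_i(ξ)|² ≤ exp(−c·p_{i,j}·[ξ_j − ξ_k]²/k)`, where `[x]` denotes the distance from `x`
to the nearest integer. -/
theorem stmt11 :
    ∃ c : ℝ, 0 < c ∧
    ∀ (k : ℕ) (hk : 0 < k) (p : Fin k → ℝ) (ξ : Fin k → ℝ),
      (∀ j, 0 ≤ p j) → (∑ j, p j) = 1 →
      (∀ j, p j ≤ p ⟨k - 1, by omega⟩) →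
      (∀ j, ξ j ∈ Set.Icc (0 : ℝ) 1) →
      ∀ j : Fin k, (j : ℕ) < k - 1 →
      ‖∑ l, (p l : ℂ) * Complex.exp (-(2 * Real.pi * Complex.I) * ξ l)‖ ^ 2
        ≤ Real.exp (-(c * p j *
            |ξ j - ξ ⟨k - 1, by omega⟩ - (round (ξ j - ξ ⟨k - 1, by omega⟩) : ℝ)| ^ 2 / k)) := by
  refine ⟨16, by norm_num, fun k hk p ξ hp hsum hmax _ j hj => ?_⟩
  set K : Fin k := ⟨k - 1, by omega⟩
  have hjK : j ≠ K := fun h => by simp [h, K] at hj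
  set r := ξ j - ξ K - round (ξ j - ξ K)
  have hpK : (k : ℝ)⁻¹ ≤ p K := by simpa using inv_card_le_of_sum_eq_one_of_forall_le hsum hmax
  have hcos := Real.eight_mul_sq_sub_round_le_one_sub_cos (ξ j - ξ K)
  have hk' : (0 : ℝ) < k := by exact_mod_cast hk
  calc _ ≤ 1 - 2 * p j * p K * (1 - cos (2 * π * (ξ j - ξ K))) :=
        norm_sq_sum_mul_exp_le_one_sub ξ hp hsum hjK
    _ ≤ 1 - 2 * p j * (k : ℝ)⁻¹ * (8 * r ^ 2) := by
        have := hp j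
        have := hp K
        gcongr
    _ = 1 - 16 * p j * |r| ^ 2 / k := by rw [sq_abs]; field_simp; ring
    _ ≤ _ := by linarith [add_one_le_exp (-(16 * p j * |r| ^ 2 / k))]
end

section
/- Let X be a k-maximal (n,k)-PMD and suppose its component CRVs X_i are not δ-exceptional, i.e., p_{i,j} < δ·√(1 + s_j(X)) for all i and all j ≤ k−1, where s_j(X) = Σ_i p_{i,j}. Then for every m ∈ ℤ_{≥0}^{k−1} with |m|₁ ≥ 2, the parameter moment M_m(X) = Σ_{i=1}^n ∏_{j=1}^{k−1} p_{i,j}^{m_j} satisfies Σ_i ∏_j (p_{i,j}·(1+s_j(X))^{−1/2})^{m_j} ≤ δ^{|m|₁ − 2}. -/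
open Finset

private lemma aux_prod_le {α : Type*} (S : Finset α) (f : α → ℝ) (δ : ℝ)
    (hf0 : ∀ j ∈ S, 0 ≤ f j) (hfδ : ∀ j ∈ S, f j ≤ δ) (m : α → ℕ) :
    ∏ j ∈ S, f j ^ m j ≤ δ ^ (∑ j ∈ S, m j) := by
  rw [← Finset.prod_pow_eq_pow_sum]
  exact Finset.prod_le_prod (fun j hj => pow_nonneg (hf0 j hj) _)
    (fun j hj => pow_le_pow_left₀ (hf0 j hj) (hfδ j hj) _)

private lemma aux_split {α : Type*} [DecidableEq α] (S : Finset α) (f : α → ℝ)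
    (m : α → ℕ) (j₀ : α) (hj₀ : j₀ ∈ S) (hm : 1 ≤ m j₀) :
    ∏ j ∈ S, f j ^ m j = f j₀ * ∏ j ∈ S, f j ^ (if j = j₀ then m j - 1 else m j) := by
  have h1 : ∏ j ∈ S, f j ^ m j = f j₀ ^ m j₀ * ∏ j ∈ S.erase j₀, f j ^ m j :=
    (Finset.mul_prod_erase S _ hj₀).symm
  have h2 : ∏ j ∈ S, f j ^ (if j = j₀ then m j - 1 else m j)
      = f j₀ ^ (m j₀ - 1) * ∏ j ∈ S.erase j₀, f j ^ m j := by
    rw [← Finset.mul_prod_erase S _ hj₀, if_pos rfl]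
    congr 1
    exact Finset.prod_congr rfl fun j hj => by rw [if_neg (Finset.ne_of_mem_erase hj)]
  rw [h1, h2, ← mul_assoc, ← pow_succ']
  congr 2
  omega

private lemma aux_sum_dec {α : Type*} [DecidableEq α] (S : Finset α) (m : α → ℕ)
    (j₀ : α) (h : j₀ ∈ S) (hm : 1 ≤ m j₀) :
    ∑ j ∈ S, (if j = j₀ then m j - 1 else m j) = (∑ j ∈ S, m j) - 1 := by
  have h1 : ∑ j ∈ S, m j = m j₀ + ∑ j ∈ S.erase j₀, m j := (Finset.add_sum_erase S m h).symm
  have h2 : ∑ j ∈ S, (if j = j₀ then m j - 1 else m j)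
      = (m j₀ - 1) + ∑ j ∈ S.erase j₀, m j := by
    rw [← Finset.add_sum_erase S _ h, if_pos rfl]
    congr 1
    exact Finset.sum_congr rfl fun j hj => if_neg (Finset.ne_of_mem_erase hj)
  omega

/-- Let `X` be a `k`-maximal `(n,k)`-PMD (maximal coordinate = the `k`-th, i.e. last one)
with `p_{i,j} = Pr[X_i = e_j]` and `s_j(X) = Σ_i p_{i,j}`.  Suppose no component is
`δ`-exceptional, i.e. `p_{i,j} < δ·√(1 + s_j(X))` for all `i` and all `j ≤ k−1`.  Then for
every `m ∈ ℤ_{≥0}^{k−1}` with `|m|₁ ≥ 2`,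
`Σ_i Π_j (p_{i,j}·(1+s_j(X))^{−1/2})^{m_j} ≤ δ^{|m|₁ − 2}`. -/
theorem stmt12 (n k : ℕ) (hk : 2 ≤ k) (δ : ℝ) (hδ : 0 < δ)
    (p : Fin n → Fin k → ℝ)
    (hp0 : ∀ i j, 0 ≤ p i j) (hpsum : ∀ i, ∑ j, p i j = 1)
    (hmax : ∀ i j, p i j ≤ p i ⟨k - 1, by omega⟩)
    (hexc : ∀ i (j : Fin k), (j : ℕ) < k - 1 →
      p i j < δ * Real.sqrt (1 + ∑ i', p i' j))
    (m : Fin k → ℕ)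
    (hm : 2 ≤ ∑ j ∈ univ.filter (fun j : Fin k => (j : ℕ) < k - 1), m j) :
    ∑ i, ∏ j ∈ univ.filter (fun j : Fin k => (j : ℕ) < k - 1),
        (p i j * (1 + ∑ i', p i' j) ^ (-(1 : ℝ) / 2)) ^ (m j)
      ≤ δ ^ ((∑ j ∈ univ.filter (fun j : Fin k => (j : ℕ) < k - 1), m j) - 2) := by
  set S : Finset (Fin k) := univ.filter (fun j : Fin k => (j : ℕ) < k - 1) with hSdef
  set q : Fin n → Fin k → ℝ := fun i j => p i j * (1 + ∑ i', p i' j) ^ (-(1 : ℝ) / 2)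
    with hqdef
  have hs0 : ∀ j : Fin k, (0:ℝ) ≤ ∑ i', p i' j :=
    fun j => Finset.sum_nonneg fun i _ => hp0 i j
  have h1s : ∀ j : Fin k, (0:ℝ) < 1 + ∑ i', p i' j := fun j => by linarith [hs0 j]
  have hcpos : ∀ j : Fin k, 0 < Real.sqrt (1 + ∑ i', p i' j) :=
    fun j => Real.sqrt_pos.2 (h1s j)
  have hrpow : ∀ j : Fin k,
      (1 + ∑ i', p i' j) ^ (-(1 : ℝ) / 2) = (Real.sqrt (1 + ∑ i', p i' j))⁻¹ := by
    intro j
    rw [show (-(1:ℝ)/2) = -(1/2) by norm_num, Real.rpow_neg (h1s j).le,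
      Real.sqrt_eq_rpow]
  have hq0 : ∀ i j, 0 ≤ q i j := fun i j =>
    mul_nonneg (hp0 i j) (Real.rpow_nonneg (h1s j).le _)
  have hqδ : ∀ i, ∀ j ∈ S, q i j ≤ δ := by
    intro i j hj
    have hj' : (j : ℕ) < k - 1 := (Finset.mem_filter.1 hj).2
    show p i j * (1 + ∑ i', p i' j) ^ (-(1 : ℝ) / 2) ≤ δ
    rw [hrpow j, ← div_eq_mul_inv, div_le_iff₀ (hcpos j)]
    exact (hexc i j hj').le
  have hsq : ∀ j : Fin k, ∑ i, q i j ^ 2 ≤ 1 := by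
    intro j
    have hp1 : ∀ i, p i j ≤ 1 := by
      intro i
      have := Finset.single_le_sum (f := p i) (fun j' _ => hp0 i j') (Finset.mem_univ j)
      rwa [hpsum i] at this
    have hps : ∑ i, p i j ^ 2 ≤ ∑ i', p i' j :=
      Finset.sum_le_sum fun i _ => by nlinarith [hp0 i j, hp1 i]
    have hcalc : ∑ i, q i j ^ 2 = (∑ i, p i j ^ 2) * (1 + ∑ i', p i' j)⁻¹ := by
      rw [Finset.sum_mul]
      refine Finset.sum_congr rfl fun i _ => ?_
      show (p i j * (1 + ∑ i', p i' j) ^ (-(1 : ℝ) / 2)) ^ 2 = _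
      rw [hrpow j, mul_pow, ← Real.sqrt_inv, Real.sq_sqrt (inv_nonneg.2 (h1s j).le)]
    rw [hcalc, ← div_eq_mul_inv, div_le_one (h1s j)]
    linarith [hps]
  have hcs : ∀ j₀ j₁ : Fin k, ∑ i, q i j₀ * q i j₁ ≤ 1 := by
    intro j₀ j₁
    have h2 := Finset.sum_mul_sq_le_sq_mul_sq univ (fun i => q i j₀) (fun i => q i j₁)
    have h3 : (0:ℝ) ≤ ∑ i, q i j₀ * q i j₁ :=
      Finset.sum_nonneg fun i _ => mul_nonneg (hq0 i j₀) (hq0 i j₁)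
    have h4 : (0:ℝ) ≤ ∑ i, q i j₀ ^ 2 :=
      Finset.sum_nonneg fun i _ => sq_nonneg _
    nlinarith [hsq j₀, hsq j₁]
  -- pick j₀ with m j₀ ≥ 1
  have hj₀ex : ∃ j₀ ∈ S, 1 ≤ m j₀ := by
    by_contra h
    push_neg at h
    have : ∑ j ∈ S, m j = 0 := Finset.sum_eq_zero fun j hj => by
      have := h j hj; omega
    omega
  obtain ⟨j₀, hj₀S, hmj₀⟩ := hj₀ex
  set m1 : Fin k → ℕ := fun j => if j = j₀ then m j - 1 else m j with hm1
  have hsum1 : ∑ j ∈ S, m1 j = (∑ j ∈ S, m j) - 1 := aux_sum_dec S m j₀ hj₀S hmj₀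
  have hj₁ex : ∃ j₁ ∈ S, 1 ≤ m1 j₁ := by
    by_contra h
    push_neg at h
    have : ∑ j ∈ S, m1 j = 0 := Finset.sum_eq_zero fun j hj => by
      have := h j hj; omega
    omega
  obtain ⟨j₁, hj₁S, hmj₁⟩ := hj₁ex
  set m2 : Fin k → ℕ := fun j => if j = j₁ then m1 j - 1 else m1 j with hm2
  have hsum2 : ∑ j ∈ S, m2 j = (∑ j ∈ S, m j) - 2 := by
    have h' : ∑ j ∈ S, m2 j = (∑ j ∈ S, m1 j) - 1 := aux_sum_dec S m1 j₁ hj₁S hmj₁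
    omega
  have key : ∀ i, ∏ j ∈ S, q i j ^ m j ≤ (q i j₀ * q i j₁) * δ ^ ((∑ j ∈ S, m j) - 2) := by
    intro i
    have e1 : ∏ j ∈ S, q i j ^ m j = q i j₀ * ∏ j ∈ S, q i j ^ m1 j :=
      aux_split S (q i) m j₀ hj₀S hmj₀
    have e2 : ∏ j ∈ S, q i j ^ m1 j = q i j₁ * ∏ j ∈ S, q i j ^ m2 j :=
      aux_split S (q i) m1 j₁ hj₁S hmj₁
    have e3 : ∏ j ∈ S, q i j ^ m2 j ≤ δ ^ ((∑ j ∈ S, m j) - 2) := by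
      rw [← hsum2]
      exact aux_prod_le S (q i) δ (fun j _ => hq0 i j) (hqδ i) m2
    have e4 : (0:ℝ) ≤ q i j₀ * q i j₁ := mul_nonneg (hq0 i j₀) (hq0 i j₁)
    calc ∏ j ∈ S, q i j ^ m j = (q i j₀ * q i j₁) * ∏ j ∈ S, q i j ^ m2 j := by
          rw [e1, e2]; ring
      _ ≤ (q i j₀ * q i j₁) * δ ^ ((∑ j ∈ S, m j) - 2) :=
          mul_le_mul_of_nonneg_left e3 e4
  calc ∑ i, ∏ j ∈ S, q i j ^ m j
      ≤ ∑ i, (q i j₀ * q i j₁) * δ ^ ((∑ j ∈ S, m j) - 2) :=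
        Finset.sum_le_sum fun i _ => key i
    _ = (∑ i, q i j₀ * q i j₁) * δ ^ ((∑ j ∈ S, m j) - 2) := by
        rw [Finset.sum_mul]
    _ ≤ 1 * δ ^ ((∑ j ∈ S, m j) - 2) :=
        mul_le_mul_of_nonneg_right (hcs j₀ j₁) (pow_nonneg hδ.le _)
    _ = δ ^ ((∑ j ∈ S, m j) - 2) := one_mul _
end
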